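/- arXiv:1807.05157 — 5 statements merged into one kernel-verified Lean document; each statement's English description precedes it below -/
import Mathlib

section
/- A real d×(d+1) matrix M is positively spanning (i.e., the signed maximal minors (-1)^i·minor(M,i), for i = 1,…,d+1, are all nonzero and of the same sign) if and only if every nonzero vector in the kernel of M has all its coordinates nonzero and of the same sign. -/
/-!
The vector `w` of signed maximal minors lies in the kernel of `M`: each coordinate of `M w` is a
Laplace expansion of a determinant with a repeated row. Moreover `minor M i = 0` exactly when some
nonzero kernel vector vanishes at `i`. So if all minors are nonzero, the kernel is the line spanned
by `w`, and its nonzero vectors have constant strict sign iff `w` does; conversely, a vanishing minor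
yields a nonzero kernel vector with a zero coordinate.
-/

/-- `minor M i` : determinant of the `d × d` matrix obtained from the `d × (d+1)`
matrix `M` by deleting the `i`-th column. -/
noncomputable def minor {d : ℕ} (M : Matrix (Fin d) (Fin (d + 1)) ℝ) (i : Fin (d + 1)) : ℝ :=
  (M.submatrix id i.succAbove).det

/-- `M` is positively spanning: all signed maximal minors `(-1)^i * minor M i`
are nonzero and have the same sign. -/
def PositivelySpanning {d : ℕ} (M : Matrix (Fin d) (Fin (d + 1)) ℝ) : Prop :=
  (∀ i : Fin (d + 1), 0 < (-1 : ℝ) ^ (i : ℕ) * minor M i) ∨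
  (∀ i : Fin (d + 1), (-1 : ℝ) ^ (i : ℕ) * minor M i < 0)

open Matrix

def StrictlySigned {ι : Type*} (v : ι → ℝ) : Prop :=
  (∀ i, 0 < v i) ∨ (∀ i, v i < 0)

theorem StrictlySigned.apply_ne_zero {ι : Type*} {v : ι → ℝ} (hv : StrictlySigned v) (i : ι) :
    v i ≠ 0 := by
  rcases hv with hv | hv
  exacts [(hv i).ne', (hv i).ne]

theorem StrictlySigned.smul {ι : Type*} {v : ι → ℝ} (hv : StrictlySigned v) {c : ℝ}
    (hc : c ≠ 0) : StrictlySigned (c • v) := by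
  rcases hc.lt_or_gt with hc | hc <;> rcases hv with hv | hv
  · exact .inr fun i => mul_neg_of_neg_of_pos hc (hv i)
  · exact .inl fun i => mul_pos_of_neg_of_neg hc (hv i)
  · exact .inl fun i => mul_pos hc (hv i)
  · exact .inr fun i => mul_neg_of_pos_of_neg hc (hv i)

theorem Matrix.mulVec_insertNth_zero {m R : Type*} [Fintype m] [NonUnitalNonAssocSemiring R]
    {n : ℕ} (M : Matrix m (Fin (n + 1)) R) (i : Fin (n + 1)) (x : Fin n → R) :
    M *ᵥ i.insertNth 0 x = M.submatrix id i.succAbove *ᵥ x := by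
  ext r
  simp [mulVec, dotProduct, Fin.sum_univ_succAbove _ i]

section SignedMinors

variable {d : ℕ} (M : Matrix (Fin d) (Fin (d + 1)) ℝ)

noncomputable def signedMinors : Fin (d + 1) → ℝ :=
  fun i => (-1) ^ (i : ℕ) * minor M i

theorem positivelySpanning_iff_strictlySigned :
    PositivelySpanning M ↔ StrictlySigned (signedMinors M) := Iff.rfl

theorem mulVec_signedMinors : M *ᵥ signedMinors M = 0 := by
  ext r
  -- put row `r` on top of `M` and expand along it
  have hdet : (of (Fin.cons (M r) M)).det = 0 :=
    det_zero_of_row_eq (Fin.succ_ne_zero r).symm rfl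
  rw [det_succ_row_zero] at hdet
  rw [Pi.zero_apply, ← hdet]
  simp only [mulVec, dotProduct]
  refine Finset.sum_congr rfl fun j _ => ?_
  change M r j * ((-1) ^ (j : ℕ) * (M.submatrix id j.succAbove).det) =
    (-1) ^ (j : ℕ) * M r j * (M.submatrix id j.succAbove).det
  ring

theorem minor_eq_zero_iff_exists_mulVec_eq_zero (i : Fin (d + 1)) :
    minor M i = 0 ↔ ∃ u, u ≠ 0 ∧ M *ᵥ u = 0 ∧ u i = 0 := by
  rw [minor, ← exists_mulVec_eq_zero_iff]
  constructor
  · rintro ⟨x, hx, hMx⟩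
    refine ⟨i.insertNth 0 x, fun h => hx ?_, by rwa [mulVec_insertNth_zero], by simp⟩
    funext k
    simpa using congrFun h (i.succAbove k)
  · rintro ⟨u, hu, hMu, hui⟩
    have hins : i.insertNth 0 (u ∘ i.succAbove) = u := by
      rw [← hui]
      exact Fin.insertNth_self_removeNth i u
    refine ⟨u ∘ i.succAbove, fun h => hu ?_, ?_⟩
    · rw [← hins, h]
      simp
    · rwa [← mulVec_insertNth_zero, hins]

theorem exists_eq_smul_signedMinors_of_mulVec_eq_zero {i : Fin (d + 1)} (hi : minor M i ≠ 0)
    {v : Fin (d + 1) → ℝ} (hv : M *ᵥ v = 0) : ∃ c : ℝ, v = c • signedMinors M := by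
  have hwi : signedMinors M i ≠ 0 := mul_ne_zero (pow_ne_zero _ (by norm_num)) hi
  refine ⟨v i / signedMinors M i, ?_⟩
  by_contra hne
  refine hi ((minor_eq_zero_iff_exists_mulVec_eq_zero M i).2
    ⟨v - (v i / signedMinors M i) • signedMinors M, sub_ne_zero.2 hne, ?_, ?_⟩)
  · rw [mulVec_sub, mulVec_smul, hv, mulVec_signedMinors, smul_zero, sub_zero]
  · simp [hwi]

end SignedMinors

theorem positivelySpanning_iff_kernel {d : ℕ} (M : Matrix (Fin d) (Fin (d + 1)) ℝ) :
    PositivelySpanning M ↔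
      ∀ v : Fin (d + 1) → ℝ, M.mulVec v = 0 → v ≠ 0 →
        (∀ i, 0 < v i) ∨ (∀ i, v i < 0) := by
  rw [positivelySpanning_iff_strictlySigned]
  constructor
  · intro hw v hv hv0
    have h0 : minor M 0 ≠ 0 := fun h => hw.apply_ne_zero 0 (by simp [signedMinors, h])
    obtain ⟨c, rfl⟩ := exists_eq_smul_signedMinors_of_mulVec_eq_zero M h0 hv
    exact hw.smul (left_ne_zero_of_smul hv0)
  · intro hker
    have hminor : ∀ i, minor M i ≠ 0 := fun i h => by
      obtain ⟨u, hu, hMu, hui⟩ := (minor_eq_zero_iff_exists_mulVec_eq_zero M i).1 h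
      exact StrictlySigned.apply_ne_zero (hker u hMu hu) i hui
    refine hker _ (mulVec_signedMinors M) fun h => hminor 0 ?_
    simpa [signedMinors] using congrFun h 0
end

section
/- Let L ⊆ ℝ^n be a linear subspace with basis v_1,…,v_{ℓ₁}, and m_1,…,m_ℓ generators of L^⊥ such that the cone C = {h : ⟨m_r,h⟩ > 0 for all r} is nonempty. Fix ε ∈ ℝ_{>0}^ℓ, 0 < t_0 < 1, and let C_ε = {h : ⟨m_r,h⟩ > ε_r for all r}. Define φ(α,t,h)_j = t^{h_j} Π_k α_k^{v_{k,j}}. Then the image φ(ℝ_{>0}^{ℓ₁} × (0,t_0) × C_ε) equals {γ ∈ ℝ_{>0}^n : γ^{m_r} < t_0^{ε_r} for all r = 1,…,ℓ}. -/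
/-!
On the image of `φ` the monomial `γ^m` only sees the `t`-part, since `m ⊥ v_k` kills
the `α`-part: `γ^m = t^⟨m,h⟩`, which is `< t₀^ε` when `t < t₀ < 1` and `⟨m,h⟩ > ε`.
Conversely, taking `α = 1` and `h = log_t γ`, the point `φ(1,t,h)` is `γ`, and
`⟨m_r,h⟩ > ε_r` amounts to `γ^{m_r} < t^{ε_r}`; by continuity of `t ↦ t^{ε_r}` this holds
for all `r` once `t < t₀` is close enough to `t₀`.
-/

open Real Filter Topology

theorem prod_rpow_mul_prod_rpow_rpow_of_orthogonal {ι κ : Type*} [Fintype ι]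
    [Fintype κ] {t : ℝ} {α : κ → ℝ} (ht : 0 < t) (hα : ∀ k, 0 < α k) {h w : ι → ℝ}
    {v : κ → ι → ℝ} (hwv : ∀ k, ∑ j, w j * v k j = 0) :
    ∏ j, (t ^ h j * ∏ k, α k ^ v k j) ^ w j = t ^ ∑ j, w j * h j := by
  have hαpow : ∀ j k, 0 ≤ α k ^ v k j := fun j k => (rpow_pos_of_pos (hα k) _).le
  simp only [mul_rpow (rpow_pos_of_pos ht _).le (Finset.prod_nonneg fun k _ => hαpow _ k),
    Finset.prod_mul_distrib, ← Real.finsetProd_rpow _ _ (fun k _ => hαpow _ k),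
    ← rpow_mul ht.le, ← rpow_mul (hα _).le]
  -- the left side is `t ^ ⟨w, h⟩ * ∏ k, α k ^ ⟨w, v k⟩`
  rw [Finset.prod_comm, ← rpow_sum_of_pos ht]
  simp only [← rpow_sum_of_pos (hα _), mul_comm (v _ _), hwv, rpow_zero,
    Finset.prod_const_one, mul_one, mul_comm (h _)]

theorem sum_mul_logb_eq_logb_prod_rpow {ι : Type*} [Fintype ι] {γ : ι → ℝ}
    (hγ : ∀ j, 0 < γ j) (b : ℝ) (w : ι → ℝ) :
    ∑ j, w j * logb b (γ j) = logb b (∏ j, γ j ^ w j) := by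
  rw [logb_prod _ _ fun j _ => (rpow_pos_of_pos (hγ j) _).ne']
  simp only [logb_rpow_eq_mul_logb_of_pos (hγ _)]

theorem exists_forall_prod_rpow_lt_rpow {ι ρ : Type*} [Fintype ι] [Finite ρ] {γ : ι → ℝ}
    {m : ρ → ι → ℝ} {ε : ρ → ℝ} {t₀ : ℝ} (ht₀ : 0 < t₀)
    (hγm : ∀ r, ∏ j, γ j ^ m r j < t₀ ^ ε r) :
    ∃ t, 0 < t ∧ t < t₀ ∧ ∀ r, ∏ j, γ j ^ m r j < t ^ ε r := by
  have hnear :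
      ∀ᶠ t in 𝓝[<] t₀, 0 < t ∧ t < t₀ ∧ ∀ r, ∏ j, γ j ^ m r j < t ^ ε r := by
    refine (eventually_nhdsWithin_of_eventually_nhds (eventually_gt_nhds ht₀)).and
      (eventually_mem_nhdsWithin.and (eventually_nhdsWithin_of_eventually_nhds ?_))
    exact eventually_all.2 fun r =>
      (continuousAt_rpow_const _ _ (.inl ht₀.ne')).eventually_const_lt (hγm r)
  exact hnear.exists

theorem phi_image_of_cone_general {n ℓ ℓ₁ : ℕ}
    (L : Submodule ℝ (Fin n → ℝ))
    (v : Fin ℓ₁ → (Fin n → ℝ))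
    (hvspan : Submodule.span ℝ (Set.range v) = L)
    (m : Fin ℓ → (Fin n → ℝ))
    (hm : ∀ r, ∀ x ∈ L, ∑ j, m r j * x j = 0)
    (ε : Fin ℓ → ℝ) (hε : ∀ r, 0 < ε r)
    (t₀ : ℝ) (ht₀ : 0 < t₀) (ht₀1 : t₀ < 1) :
    ∀ γ : Fin n → ℝ, (∀ j, 0 < γ j) →
      ((∃ α : Fin ℓ₁ → ℝ, ∃ t : ℝ, ∃ h : Fin n → ℝ,
          (∀ k, 0 < α k) ∧ 0 < t ∧ t < t₀ ∧
          (∀ r, ε r < ∑ j, m r j * h j) ∧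
          ∀ j, γ j = t ^ h j * ∏ k, α k ^ v k j) ↔
        ∀ r, ∏ j, γ j ^ m r j < t₀ ^ ε r) := by
  intro γ hγ
  constructor
  · rintro ⟨α, t, h, hα, ht, htt₀, hεh, hγφ⟩ r
    have hmv : ∀ k, ∑ j, m r j * v k j = 0 :=
      fun k => hm r (v k) (hvspan ▸ Submodule.subset_span ⟨k, rfl⟩)
    rw [Finset.prod_congr rfl fun j _ => congrArg (· ^ m r j) (hγφ j),
      prod_rpow_mul_prod_rpow_rpow_of_orthogonal ht hα hmv]
    calc t ^ ∑ j, m r j * h j < t ^ ε r :=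
          rpow_lt_rpow_of_exponent_gt ht (htt₀.trans ht₀1) (hεh r)
      _ < t₀ ^ ε r := rpow_lt_rpow ht.le htt₀ (hε r)
  · intro hγm
    obtain ⟨t, ht, htt₀, hγt⟩ := exists_forall_prod_rpow_lt_rpow ht₀ hγm
    have ht1 : t < 1 := htt₀.trans ht₀1
    refine ⟨1, t, fun j => logb t (γ j), fun _ => one_pos, ht, htt₀, fun r => ?_,
      fun j => ?_⟩
    · rw [sum_mul_logb_eq_logb_prod_rpow hγ, lt_logb_iff_rpow_lt_of_base_lt_one ht ht1
        (Finset.prod_pos fun j _ => rpow_pos_of_pos (hγ j) _)]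
      exact hγt r
    · simp only [Pi.one_apply, one_rpow, Finset.prod_const_one, mul_one,
        rpow_logb ht ht1.ne (hγ j)]

theorem phi_image_of_cone {n ℓ ℓ₁ : ℕ}
    (L : Submodule ℝ (Fin n → ℝ))
    (v : Fin ℓ₁ → (Fin n → ℝ))
    (hvli : LinearIndependent ℝ v)
    (hvspan : Submodule.span ℝ (Set.range v) = L)
    (m : Fin ℓ → (Fin n → ℝ))
    (hm : ∀ r, ∀ x ∈ L, ∑ j, m r j * x j = 0)
    (hmgen : ∀ w : Fin n → ℝ, (∀ x ∈ L, ∑ j, w j * x j = 0) →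
      w ∈ Submodule.span ℝ (Set.range m))
    (hcone : ∃ h : Fin n → ℝ, ∀ r, 0 < ∑ j, m r j * h j)
    (ε : Fin ℓ → ℝ) (hε : ∀ r, 0 < ε r)
    (t₀ : ℝ) (ht₀ : 0 < t₀) (ht₀1 : t₀ < 1) :
    ∀ γ : Fin n → ℝ, (∀ j, 0 < γ j) →
      ((∃ α : Fin ℓ₁ → ℝ, ∃ t : ℝ, ∃ h : Fin n → ℝ,
          (∀ k, 0 < α k) ∧ 0 < t ∧ t < t₀ ∧
          (∀ r, ε r < ∑ j, m r j * h j) ∧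
          ∀ j, γ j = t ^ h j * ∏ k, α k ^ v k j) ↔
        ∀ r, ∏ j, γ j ^ m r j < t₀ ^ ε r) :=
  phi_image_of_cone_general L v hvspan m hm ε hε t₀ ht₀ ht₀1
end

section
/- Let C be the 2×5 matrix ((1, 0, C₁₃, C₁₄, −T₁), (0, 1, C₂₃, C₂₄, −T₂)) with C₁₃ = k₅(1/k₂ + 1/k₃), C₁₄ = (k₄k₅/k₃)(1/k₁ + 1/k₂), C₂₃ = k₅/k₆, C₂₄ = k₄k₅/(k₃k₆), where all k_i, T_i > 0. Then the 2×3 submatrix of C with columns {1, 3, 5} is positively spanning if and only if T₁k₂k₃ − T₂k₂k₆ − T₂k₃k₆ > 0. -/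
/-!
With first column `e₁` and `0 < b`, the signed minors of `!![1, a, c; 0, b, d]` are
`a d - b c`, `-d` and `b`, so positive spanning means `d < 0` and `b c < a d`. Here `d = -T₂`,
and `a d - b c = k₅/(k₂ k₃ k₆) · (T₁ k₂ k₃ - T₂ k₂ k₆ - T₂ k₃ k₆)` with a positive prefactor.
-/

/-- The `i`-th maximal minor of a `2 × 3` real matrix: the determinant of the
`2 × 2` matrix obtained by deleting the `i`-th column. -/
noncomputable def minor23 (M : Matrix (Fin 2) (Fin 3) ℝ) (i : Fin 3) : ℝ :=
  (M.submatrix id i.succAbove).det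

/-- A `2 × 3` matrix is positively spanning if its signed maximal minors
`(-1)^i * minor23 M i` are all nonzero and of the same sign. -/
def PositivelySpanning23 (M : Matrix (Fin 2) (Fin 3) ℝ) : Prop :=
  (∀ i : Fin 3, 0 < (-1 : ℝ) ^ (i : ℕ) * minor23 M i) ∨
  (∀ i : Fin 3, (-1 : ℝ) ^ (i : ℕ) * minor23 M i < 0)

theorem minor23_zero (M : Matrix (Fin 2) (Fin 3) ℝ) :
    minor23 M 0 = M 0 1 * M 1 2 - M 0 2 * M 1 1 := by
  simp [minor23, Matrix.det_fin_two]

theorem minor23_one (M : Matrix (Fin 2) (Fin 3) ℝ) :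
    minor23 M 1 = M 0 0 * M 1 2 - M 0 2 * M 1 0 := by
  simp [minor23, Matrix.det_fin_two]

theorem minor23_two (M : Matrix (Fin 2) (Fin 3) ℝ) :
    minor23 M 2 = M 0 0 * M 1 1 - M 0 1 * M 1 0 := by
  simp [minor23, Matrix.det_fin_two, Fin.succAbove]

theorem positivelySpanning23_iff (M : Matrix (Fin 2) (Fin 3) ℝ) :
    PositivelySpanning23 M ↔
      (0 < minor23 M 0 ∧ minor23 M 1 < 0 ∧ 0 < minor23 M 2) ∨
      (minor23 M 0 < 0 ∧ 0 < minor23 M 1 ∧ minor23 M 2 < 0) := by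
  simp [PositivelySpanning23, Fin.forall_fin_succ]

theorem positivelySpanning23_of_unit_column_iff {a b c d : ℝ} (hb : 0 < b) :
    PositivelySpanning23 !![1, a, c; 0, b, d] ↔ d < 0 ∧ c * b < a * d := by
  simp only [positivelySpanning23_iff, minor23_zero, minor23_one, minor23_two, Fin.isValue, Matrix.of_apply, Matrix.cons_val', Matrix.cons_val_one,
    Matrix.cons_val_zero, Matrix.cons_val_fin_one, Matrix.cons_val, sub_pos, one_mul, mul_zero,
    sub_zero, sub_neg]
  constructor
  · rintro (⟨h₀, h₁, -⟩ | ⟨-, -, h₂⟩)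
    · exact ⟨h₁, h₀⟩
    · exact absurd h₂ hb.not_gt
  · rintro ⟨h₁, h₀⟩
    exact Or.inl ⟨h₀, h₁, hb⟩

theorem hhk_simplex1_positively_decorated_iff_general
    (k₂ k₃ k₅ k₆ T₁ T₂ : ℝ)
    (hk₂ : 0 < k₂) (hk₃ : 0 < k₃)
    (hk₅ : 0 < k₅) (hk₆ : 0 < k₆)
    (hT₂ : 0 < T₂) :
    PositivelySpanning23
      !![1, k₅ * (1 / k₂ + 1 / k₃), -T₁;
         0, k₅ / k₆, -T₂] ↔
      T₁ * k₂ * k₃ - T₂ * k₂ * k₆ - T₂ * k₃ * k₆ > 0 := by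
  rw [positivelySpanning23_of_unit_column_iff (by positivity), and_iff_right (neg_lt_zero.mpr hT₂),
    ← sub_pos]
  have hminor : k₅ * (1 / k₂ + 1 / k₃) * -T₂ - -T₁ * (k₅ / k₆) =
      k₅ / (k₂ * k₃ * k₆) * (T₁ * k₂ * k₃ - T₂ * k₂ * k₆ - T₂ * k₃ * k₆) := by
    field_simp
    ring
  rw [hminor, mul_pos_iff_of_pos_left (by positivity), gt_iff_lt]

theorem hhk_simplex1_positively_decorated_iff
    (k₁ k₂ k₃ k₄ k₅ k₆ T₁ T₂ : ℝ)
    (hk₁ : 0 < k₁) (hk₂ : 0 < k₂) (hk₃ : 0 < k₃)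
    (hk₄ : 0 < k₄) (hk₅ : 0 < k₅) (hk₆ : 0 < k₆)
    (hT₁ : 0 < T₁) (hT₂ : 0 < T₂) :
    PositivelySpanning23
      !![1, k₅ * (1 / k₂ + 1 / k₃), -T₁;
         0, k₅ / k₆, -T₂] ↔
      T₁ * k₂ * k₃ - T₂ * k₂ * k₆ - T₂ * k₃ * k₆ > 0 :=
  hhk_simplex1_positively_decorated_iff_general k₂ k₃ k₅ k₆ T₁ T₂ hk₂ hk₃ hk₅ hk₆ hT₂
end

section
/- Let C be the 2×5 matrix ((1, 0, C₁₃, C₁₄, −T₁), (0, 1, C₂₃, C₂₄, −T₂)) as in the hybrid histidine kinase example with all parameters positive. Suppose T₁k₂k₃ − T₂k₂k₆ − T₂k₃k₆ > 0 and T₁k₁k₂ − T₂k₁k₆ − T₂k₂k₆ < 0. Then the 2×3 submatrix of C with columns {3, 4, 5} is positively spanning if and only if k₁ < k₃. -/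
lemma minor0 (a b c d e f : ℝ) : minor23 !![a,b,c; d,e,f] 0 = b*f - c*e := by
  simp [minor23, Matrix.det_fin_two, Fin.succAbove]

lemma minor1 (a b c d e f : ℝ) : minor23 !![a,b,c; d,e,f] 1 = a*f - c*d := by
  simp [minor23, Matrix.det_fin_two, Fin.succAbove]

lemma minor2 (a b c d e f : ℝ) : minor23 !![a,b,c; d,e,f] 2 = a*e - b*d := by
  simp [minor23, Matrix.det_fin_two, Fin.succAbove]

theorem hhk_simplex2_positively_decorated_iff
    (k₁ k₂ k₃ k₄ k₅ k₆ T₁ T₂ : ℝ)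
    (hk₁ : 0 < k₁) (hk₂ : 0 < k₂) (hk₃ : 0 < k₃)
    (hk₄ : 0 < k₄) (hk₅ : 0 < k₅) (hk₆ : 0 < k₆)
    (hT₁ : 0 < T₁) (hT₂ : 0 < T₂)
    (h1 : T₁ * k₂ * k₃ - T₂ * k₂ * k₆ - T₂ * k₃ * k₆ > 0)
    (h2 : T₁ * k₁ * k₂ - T₂ * k₁ * k₆ - T₂ * k₂ * k₆ < 0) :
    PositivelySpanning23
      !![k₅ * (1 / k₂ + 1 / k₃), k₄ * k₅ / k₃ * (1 / k₁ + 1 / k₂), -T₁;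
         k₅ / k₆, k₄ * k₅ / (k₃ * k₆), -T₂] ↔
      k₁ < k₃ := by
  set M := !![k₅ * (1 / k₂ + 1 / k₃), k₄ * k₅ / k₃ * (1 / k₁ + 1 / k₂), -T₁;
         k₅ / k₆, k₄ * k₅ / (k₃ * k₆), -T₂] with hM
  have m0 : minor23 M 0 = (k₄ * k₅ / k₃ * (1 / k₁ + 1 / k₂)) * (-T₂) - (-T₁) * (k₄ * k₅ / (k₃ * k₆)) := minor0 ..
  have m1 : minor23 M 1 = (k₅ * (1 / k₂ + 1 / k₃)) * (-T₂) - (-T₁) * (k₅ / k₆) := minor1 ..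
  have m2 : minor23 M 2 = (k₅ * (1 / k₂ + 1 / k₃)) * (k₄ * k₅ / (k₃ * k₆)) - (k₄ * k₅ / k₃ * (1 / k₁ + 1 / k₂)) * (k₅ / k₆) := minor2 ..
  have h0neg : minor23 M 0 < 0 := by
    rw [m0]
    have : (k₄ * k₅ / k₃ * (1 / k₁ + 1 / k₂)) * (-T₂) - (-T₁) * (k₄ * k₅ / (k₃ * k₆))
        = (k₄ * k₅ / (k₁ * k₂ * k₃ * k₆)) * (T₁ * k₁ * k₂ - T₂ * k₁ * k₆ - T₂ * k₂ * k₆) := by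
      field_simp; ring
    rw [this]
    exact mul_neg_of_pos_of_neg (by positivity) h2
  have h1neg : -(minor23 M 1) < 0 := by
    rw [m1]
    have : -((k₅ * (1 / k₂ + 1 / k₃)) * (-T₂) - (-T₁) * (k₅ / k₆))
        = -((k₅ / (k₂ * k₃ * k₆)) * (T₁ * k₂ * k₃ - T₂ * k₂ * k₆ - T₂ * k₃ * k₆)) := by
      field_simp; ring
    rw [this]
    simpa using mul_pos (show (0:ℝ) < k₅ / (k₂ * k₃ * k₆) by positivity) h1
  have m2eq : minor23 M 2 = (k₄ * k₅ * k₅ / (k₃ * k₆)) * (1 / k₃ - 1 / k₁) := by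
    rw [m2]; field_simp; ring
  constructor
  · rintro (h | h)
    · have := h 0
      simp at this
      linarith
    · have := h 2
      rw [show ((-1:ℝ)) ^ ((2 : Fin 3) : ℕ) = 1 by norm_num] at this
      rw [one_mul, m2eq] at this
      have hK : (0:ℝ) < k₄ * k₅ * k₅ / (k₃ * k₆) := by positivity
      have hd : 1 / k₃ - 1 / k₁ < 0 := by
        by_contra hc
        push_neg at hc
        nlinarith [mul_nonneg hK.le hc]
      by_contra hge
      push_neg at hge
      have := one_div_le_one_div_of_le hk₃ hge
      linarith
  · intro hlt
    right
    intro i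
    fin_cases i
    · simpa using h0neg
    · simpa using h1neg
    · have hK : (0:ℝ) < k₄ * k₅ * k₅ / (k₃ * k₆) := by positivity
      have hd : 1 / k₃ < 1 / k₁ := one_div_lt_one_div_of_lt hk₁ hlt
      have : minor23 M 2 < 0 := by rw [m2eq]; nlinarith
      simpa using this
end

section
/- For positive constants S_tot, F_tot, E_tot, K₁, L₁, T₀, T₁, the two conditions E_tot − K₁T₀F_tot/(L₁T₁) > 0 and S_tot − (K₁T₀ + L₁T₁)F_tot/(L₁T₁) > 0 hold if and only if S_tot > F_tot and K₁T₀/(L₁T₁) < min{(S_tot − F_tot)/F_tot, E_tot/F_tot}. -/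
theorem phospho_decorated_conditions_iff
    (Stot Etot Ftot K₁ L₁ T₀ T₁ : ℝ)
    (hS : 0 < Stot) (hE : 0 < Etot) (hF : 0 < Ftot)
    (hK : 0 < K₁) (hL : 0 < L₁) (hT₀ : 0 < T₀) (hT₁ : 0 < T₁) :
    (Etot - K₁ * T₀ * Ftot / (L₁ * T₁) > 0 ∧
      Stot - (K₁ * T₀ + L₁ * T₁) * Ftot / (L₁ * T₁) > 0) ↔
    (Stot > Ftot ∧
      K₁ * T₀ / (L₁ * T₁) < min ((Stot - Ftot) / Ftot) (Etot / Ftot)) := by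
  have hb : 0 < L₁ * T₁ := mul_pos hL hT₁
  have ha : 0 < K₁ * T₀ := mul_pos hK hT₀
  rw [lt_min_iff]
  simp only [gt_iff_lt, sub_pos, div_lt_iff₀ hb, div_lt_div_iff₀ hb hF, div_mul_eq_mul_div, lt_div_iff₀ hF]
  constructor
  · rintro ⟨h1, h2⟩
    refine ⟨?_, ?_, ?_⟩ <;> nlinarith
  · rintro ⟨h1, h2, h3⟩
    constructor <;> nlinarith
end
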